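/- arXiv:1801.06008 — 4 statements merged into one kernel-verified Lean document; each statement's English description precedes it below -/
import Mathlib

section
/- As μ → 0⁺, γ^{0,1}_μ(p*(μ/2), p*(μ/2)) converges to (5/4)√2 − 1, which is strictly greater than 1/√2. -/
open Filter

noncomputable def pstar (lam : ℝ) : ℝ := 2 - Real.sqrt 2 + (3/4 - 1/Real.sqrt 2) * lam

noncomputable def gamma01 (mu a b : ℝ) : ℝ :=
  -(2*a + 2*b - a*b - 2*b*mu + a*b*mu - 2) /
    (mu * (a - b - a * mu + b * mu + 1))

noncomputable def G (mu : ℝ) : ℝ :=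
  -Real.sqrt 2 * (3/4 - 1/Real.sqrt 2) + (3/4 - 1/Real.sqrt 2)^2 * mu / 4
    + (2 * pstar (mu/2) - (pstar (mu/2))^2)

lemma sqrt2_pos : (0:ℝ) < Real.sqrt 2 := Real.sqrt_pos.2 (by norm_num)

lemma key (mu : ℝ) (hmu : mu ≠ 0) :
    gamma01 mu (pstar (mu/2)) (pstar (mu/2)) = G mu := by
  have hs : Real.sqrt 2 ^ 2 = 2 := Real.sq_sqrt (by norm_num)
  have hsne : Real.sqrt 2 ≠ 0 := ne_of_gt sqrt2_pos
  unfold gamma01 G pstar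
  field_simp
  ring_nf
  linear_combination 2048 * (Real.sqrt 2)^3 * hs

theorem stmt12 :
    Tendsto (fun mu : ℝ => gamma01 mu (pstar (mu / 2)) (pstar (mu / 2)))
      (nhdsWithin 0 (Set.Ioi 0)) (nhds ((5/4) * Real.sqrt 2 - 1)) ∧
    1 / Real.sqrt 2 < (5/4) * Real.sqrt 2 - 1 := by
  have hs : Real.sqrt 2 ^ 2 = 2 := Real.sq_sqrt (by norm_num)
  have hsne : Real.sqrt 2 ≠ 0 := ne_of_gt sqrt2_pos
  constructor
  · have hG : Tendsto G (nhdsWithin 0 (Set.Ioi 0)) (nhds ((5/4) * Real.sqrt 2 - 1)) := by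
      have hc : Continuous G := by unfold G pstar; fun_prop
      have h0 : Tendsto G (nhdsWithin (0:ℝ) (Set.Ioi 0)) (nhds (G 0)) :=
        (hc.tendsto 0).mono_left nhdsWithin_le_nhds
      convert h0 using 2
      unfold G pstar
      field_simp
      ring_nf
      linear_combination 256 * (Real.sqrt 2)^2 * hs
    refine hG.congr' ?_
    filter_upwards [self_mem_nhdsWithin] with mu hmu
    exact (key mu (ne_of_gt hmu)).symm
  · rw [div_lt_iff₀ sqrt2_pos]
    nlinarith [hs, sqrt2_pos]
end

section
/- As μ → 0⁺, γ^{0,0}_μ(p*(μ/2), p*(2μ)) converges to −(1 + 2√2)/(8(−2 + √2)), and this limit is strictly greater than 1/√2. -/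
open Filter

noncomputable def gamma00 (mu a b : ℝ) : ℝ :=
  -2 * (a - b - mu + b * mu) / (mu * (a + b + mu - a * mu - b * mu))

noncomputable def fAux (mu : ℝ) : ℝ :=
  (-2 * (pstar (2 * mu) - 1 - 3/2 * (3/4 - 1/Real.sqrt 2))) /
    (pstar (mu / 2) + pstar (2 * mu) + mu - pstar (mu / 2) * mu - pstar (2 * mu) * mu)

lemma sqrt2_lt : Real.sqrt 2 < 2 := by
  nlinarith [Real.sq_sqrt (by norm_num : (2:ℝ) ≥ 0), sqrt2_pos]

lemma sqrt2_sq : Real.sqrt 2 * Real.sqrt 2 = 2 := Real.mul_self_sqrt (by norm_num)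

theorem stmt13 :
    Tendsto (fun mu : ℝ => gamma00 mu (pstar (mu / 2)) (pstar (2 * mu)))
      (nhdsWithin 0 (Set.Ioi 0))
      (nhds (-(1 + 2 * Real.sqrt 2) / (8 * (-2 + Real.sqrt 2)))) ∧
    1 / Real.sqrt 2 < -(1 + 2 * Real.sqrt 2) / (8 * (-2 + Real.sqrt 2)) := by
  have hs := sqrt2_pos
  have hs2 := sqrt2_sq
  have hlt := sqrt2_lt
  constructor
  · have heq : ∀ mu ∈ Set.Ioi (0:ℝ),
        gamma00 mu (pstar (mu / 2)) (pstar (2 * mu)) = fAux mu := by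
      intro mu hmu
      have hmu' : mu ≠ 0 := ne_of_gt hmu
      unfold gamma00 fAux
      rw [show -2 * (pstar (mu/2) - pstar (2*mu) - mu + pstar (2*mu) * mu)
            = mu * (-2 * (pstar (2 * mu) - 1 - 3/2 * (3/4 - 1/Real.sqrt 2))) by
          unfold pstar; ring]
      exact mul_div_mul_left _ _ hmu'
    have hcont : ContinuousAt fAux 0 := by
      have hpc : Continuous pstar := by
        unfold pstar; continuity
      have hden : (pstar (0 / 2) + pstar (2 * 0) + 0 - pstar (0 / 2) * 0 - pstar (2 * 0) * 0) ≠ 0 := by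
        simp only [zero_div, mul_zero]
        unfold pstar
        nlinarith
      apply ContinuousAt.div
      · fun_prop
      · fun_prop
      · exact hden
    have hval : fAux 0 = -(1 + 2 * Real.sqrt 2) / (8 * (-2 + Real.sqrt 2)) := by
      have h0 : Real.sqrt 2 ≠ 0 := ne_of_gt hs
      have h1 : (2:ℝ) - Real.sqrt 2 + (2 - Real.sqrt 2) ≠ 0 := by nlinarith
      have h2 : (8:ℝ) * (-2 + Real.sqrt 2) ≠ 0 := by nlinarith
      unfold fAux pstar
      norm_num
      rw [div_eq_div_iff h1 h2]
      field_simp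
      nlinarith [sqrt2_sq]
    have : Tendsto fAux (nhdsWithin 0 (Set.Ioi 0))
        (nhds (-(1 + 2 * Real.sqrt 2) / (8 * (-2 + Real.sqrt 2)))) := by
      rw [← hval]
      exact hcont.continuousWithinAt.tendsto
    exact this.congr' (by filter_upwards [self_mem_nhdsWithin] with mu hmu using (heq mu hmu).symm)
  · rw [show (8:ℝ)*(-2+Real.sqrt 2) = -(8*(2-Real.sqrt 2)) by ring, div_neg, neg_div, neg_neg,
      div_lt_div_iff₀ hs (by nlinarith : (0:ℝ) < 8*(2-Real.sqrt 2))]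
    nlinarith
end

section
/- As μ → 0⁺, γ^{1,1}_μ(p*(2μ), p*(μ/2)) converges to (−1/16)·(−25 + 14√2)/(√2 − 1), and this limit is strictly greater than 1/√2. -/
open Filter

noncomputable def gamma11 (mu a b : ℝ) : ℝ :=
  -(a - b + mu * b) / (mu * (a + b + mu - a * mu - b * mu - 2))

noncomputable def Nfun (mu : ℝ) : ℝ :=
  (3/2)*(3/4 - 1/Real.sqrt 2) + 2 - Real.sqrt 2 + (3/4 - 1/Real.sqrt 2)*mu/2

noncomputable def Dfun (mu : ℝ) : ℝ :=
  2 - 2*Real.sqrt 2 + ((5/2)*(3/4 - 1/Real.sqrt 2) + 2*Real.sqrt 2 - 3)*mu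
    - (5/2)*(3/4 - 1/Real.sqrt 2)*mu^2

theorem stmt14 :
    Tendsto (fun mu : ℝ => gamma11 mu (pstar (2 * mu)) (pstar (mu / 2)))
      (nhdsWithin 0 (Set.Ioi 0))
      (nhds ((-1/16) * (-25 + 14 * Real.sqrt 2) / (Real.sqrt 2 - 1))) ∧
    1 / Real.sqrt 2 < (-1/16) * (-25 + 14 * Real.sqrt 2) / (Real.sqrt 2 - 1) := by
  have hs : Real.sqrt 2 ^ 2 = 2 := Real.sq_sqrt (by norm_num)
  have hs0 : (0:ℝ) ≤ Real.sqrt 2 := Real.sqrt_nonneg 2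
  have hs1 : (1:ℝ) < Real.sqrt 2 := by nlinarith
  have hsne : Real.sqrt 2 ≠ 0 := by linarith
  have hD0 : Dfun 0 ≠ 0 := by
    simp only [Dfun]; nlinarith
  constructor
  · have heq : ∀ mu ∈ Set.Ioi (0:ℝ),
        gamma11 mu (pstar (2 * mu)) (pstar (mu / 2)) = -Nfun mu / Dfun mu := by
      intro mu hmu
      have hm : mu ≠ 0 := ne_of_gt hmu
      simp only [gamma11, pstar, Nfun, Dfun]
      rw [show -(2 - Real.sqrt 2 + (3/4 - 1/Real.sqrt 2) * (2*mu) -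
            (2 - Real.sqrt 2 + (3/4 - 1/Real.sqrt 2) * (mu/2)) +
            mu * (2 - Real.sqrt 2 + (3/4 - 1/Real.sqrt 2) * (mu/2)))
          = mu * -((3/2)*(3/4 - 1/Real.sqrt 2) + 2 - Real.sqrt 2 +
              (3/4 - 1/Real.sqrt 2)*mu/2) by ring]
      rw [show mu * ((2 - Real.sqrt 2 + (3/4 - 1/Real.sqrt 2) * (2*mu)) +
            (2 - Real.sqrt 2 + (3/4 - 1/Real.sqrt 2) * (mu/2)) + mu -
            (2 - Real.sqrt 2 + (3/4 - 1/Real.sqrt 2) * (2*mu)) * mu -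
            (2 - Real.sqrt 2 + (3/4 - 1/Real.sqrt 2) * (mu/2)) * mu - 2)
          = mu * (2 - 2*Real.sqrt 2 + ((5/2)*(3/4 - 1/Real.sqrt 2) + 2*Real.sqrt 2 - 3)*mu
              - (5/2)*(3/4 - 1/Real.sqrt 2)*mu^2) by ring]
      rw [mul_div_mul_left _ _ hm]
    have hlim : Tendsto (fun mu : ℝ => -Nfun mu / Dfun mu) (nhds 0)
        (nhds (-Nfun 0 / Dfun 0)) := by
      apply Tendsto.div
      · apply Tendsto.neg
        have : Continuous Nfun := by unfold Nfun; continuity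
        exact this.tendsto 0
      · have : Continuous Dfun := by unfold Dfun; continuity
        exact this.tendsto 0
      · exact hD0
    have h12 : (1:ℝ)/Real.sqrt 2 = Real.sqrt 2/2 := by
      rw [div_eq_div_iff (by linarith) (by norm_num)]; nlinarith
    have hval : -Nfun 0 / Dfun 0 = (-1/16) * (-25 + 14 * Real.sqrt 2) / (Real.sqrt 2 - 1) := by
      simp only [Nfun, Dfun, h12]
      rw [div_eq_div_iff (by nlinarith) (by linarith)]
      ring_nf
    rw [← hval]
    exact (hlim.mono_left nhdsWithin_le_nhds).congr'
      (Filter.eventuallyEq_of_mem self_mem_nhdsWithin fun x hx => (heq x hx).symm)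
  · rw [div_lt_div_iff₀ (by linarith) (by linarith)]
    nlinarith
end

section
/- As μ → 0⁺, γ^{1,0}_μ(p*(2μ), p*(2μ)) converges to −2 + 2√2, which is strictly greater than 1/√2. -/
open Filter

noncomputable def gamma10 (mu a b : ℝ) : ℝ :=
  (2*a + 2*b + 2*mu - a*b - a*mu - 2*b*mu + a*b*mu - 2) /
    (mu * (b - a + mu * a - b * mu + 1))

theorem stmt15 :
    Tendsto (fun mu : ℝ => gamma10 mu (pstar (2 * mu)) (pstar (2 * mu)))
      (nhdsWithin 0 (Set.Ioi 0)) (nhds (-2 + 2 * Real.sqrt 2)) ∧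
    1 / Real.sqrt 2 < -2 + 2 * Real.sqrt 2 := by
  have h2 : Real.sqrt 2 * Real.sqrt 2 = 2 := Real.mul_self_sqrt (by norm_num)
  have hpos : (0:ℝ) < Real.sqrt 2 := Real.sqrt_pos.mpr (by norm_num)
  set s : ℝ := Real.sqrt 2 with hs
  constructor
  · set t : ℝ := 3/2 - s with ht
    set g : ℝ → ℝ := fun mu => (-2 + 2*s) + (2*(2-s)*t - 3*t - t^2)*mu + t^2*mu^2 with hg
    have hcong : ∀ mu ∈ Set.Ioi (0:ℝ),
        gamma10 mu (pstar (2 * mu)) (pstar (2 * mu)) = g mu := by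
      intro mu hmu
      have hmu' : mu ≠ 0 := ne_of_gt hmu
      have h3 : 1 / s = s / 2 := by
        rw [div_eq_div_iff (ne_of_gt hpos) (by norm_num : (2:ℝ) ≠ 0), one_mul, h2]
      simp only [gamma10, pstar, hg, ht, hs.symm, h3]
      rw [div_eq_iff (show mu * _ ≠ 0 by ring_nf; exact hmu')]
      linear_combination (-(1+mu)) * h2
    have hlim : Tendsto g (nhdsWithin 0 (Set.Ioi 0)) (nhds (-2 + 2 * s)) := by
      have : ContinuousAt g 0 := by fun_prop
      have h0 : g 0 = -2 + 2 * s := by simp [hg]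
      simpa [h0] using (this.tendsto.mono_left nhdsWithin_le_nhds)
    exact hlim.congr' (eventually_nhdsWithin_of_forall fun x hx => (hcong x hx).symm)
  · rw [div_lt_iff₀ hpos]
    nlinarith [h2, hpos]
end
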